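/- If all conversion orders between two carriers c1 and c2 have conversion efficiency 1 and zero conversion cost, and in the optimal market outcome some conversion order from c1 to c2 is strictly partially accepted (0 < x*_co < 1), then the optimal dual prices satisfy π*_{c2} = π*_{c1} (full price convergence between the two carrier markets). -/

import Mathlib

/-!
For fixed prices the Lagrangian is affine in each acceptance `x_co`, with slope `Q_co` times the
reduced profit `η_co π_dst − π_src − P_co`. By the balance constraints the Lagrangian at `x*`
equals the welfare, so dual optimality makes `x*` a maximiser of the Lagrangian over the box
`[0,1]`. A strictly fractional `x*_co` is then an interior maximiser of an affine function of
`x_co`, which forces the slope to vanish; with `η_co = 1` and `P_co = 0` this reads `π_c2 = π_c1`.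
-/

open Finset

section PriceConvergence

variable {C O CO : Type*} [Fintype C] [Fintype O] [Fintype CO] [DecidableEq C]

/-- Total welfare: elementary order welfare minus conversion costs. -/
def convWelfare (oc : O → C) (P Q : O → ℝ) (Qco Pco : CO → ℝ)
    (xo : O → ℝ) (xc : CO → ℝ) : ℝ :=
  ∑ o, P o * Q o * xo o - ∑ co, Pco co * Qco co * xc co

/-- Left-hand side of the balance constraint of carrier `c1`. -/
def convBalance (oc : O → C) (Q : O → ℝ) (src dst : CO → C) (Qco eta : CO → ℝ)
    (xo : O → ℝ) (xc : CO → ℝ) (c1 : C) : ℝ :=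
  ∑ o ∈ univ.filter (fun o => oc o = c1), Q o * xo o
  + ∑ co ∈ univ.filter (fun co => src co = c1), Qco co * xc co
  - ∑ co ∈ univ.filter (fun co => dst co = c1), eta co * Qco co * xc co

/-- Lagrangian obtained by relaxing the balance constraints with multipliers `pis`. -/
def convLagrangian (oc : O → C) (P Q : O → ℝ) (src dst : CO → C)
    (Qco eta Pco : CO → ℝ) (pis : C → ℝ) (xo : O → ℝ) (xc : CO → ℝ) : ℝ :=
  convWelfare oc P Q Qco Pco xo xc
    - ∑ c1, pis c1 * convBalance oc Q src dst Qco eta xo xc c1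

def convReducedProfit (src dst : CO → C) (eta Pco : CO → ℝ) (pis : C → ℝ) (co : CO) : ℝ :=
  eta co * pis (dst co) - pis (src co) - Pco co

theorem Finset.sum_mul_sum_filter_eq {ι κ R : Type*} [Fintype ι] [Fintype κ] [DecidableEq κ]
    [CommSemiring R] (k : ι → κ) (w : κ → R) (f : ι → R) :
    ∑ c, w c * ∑ i ∈ univ.filter (fun i => k i = c), f i = ∑ i, w (k i) * f i := by
  simp_rw [mul_sum]
  rw [← sum_fiberwise univ k (fun i => w (k i) * f i)]
  exact sum_congr rfl fun c _ => sum_congr rfl fun i hi => by rw [(mem_filter.1 hi).2]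

theorem Finset.sum_mul_update {ι R : Type*} [Fintype ι] [DecidableEq ι] [CommRing R]
    (w x : ι → R) (i : ι) (t : R) :
    ∑ j, w j * Function.update x i t j = ∑ j, w j * x j + w i * (t - x i) := by
  rw [← add_sum_erase univ _ (mem_univ i), ← add_sum_erase univ _ (mem_univ i),
    sum_congr rfl fun j hj => by rw [Function.update_of_ne (ne_of_mem_erase hj)],
    Function.update_self]
  ring

theorem eq_zero_of_forall_Icc_sub_mul_nonpos {K : Type*} [Field K] [LinearOrder K]
    [IsStrictOrderedRing K] {x a : K} (hx : x ∈ Set.Ioo 0 1)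
    (h : ∀ t ∈ Set.Icc (0 : K) 1, (t - x) * a ≤ 0) : a = 0 := by
  obtain ⟨hx0, hx1⟩ := hx
  have hlow := h (x / 2) ⟨by positivity, by linarith⟩
  have hhigh := h ((x + 1) / 2) ⟨by linarith, by linarith⟩
  nlinarith

theorem convLagrangian_eq_sum_reducedProfit (oc : O → C) (P Q : O → ℝ) (src dst : CO → C)
    (Qco eta Pco : CO → ℝ) (pis : C → ℝ) (xo : O → ℝ) (xc : CO → ℝ) :
    convLagrangian oc P Q src dst Qco eta Pco pis xo xc
      = ∑ o, (P o - pis (oc o)) * Q o * xo o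
        + ∑ co, Qco co * convReducedProfit src dst eta Pco pis co * xc co := by
  simp only [convLagrangian, convWelfare, convBalance, mul_add, mul_sub, sum_add_distrib,
    sum_sub_distrib, sum_mul_sum_filter_eq]
  have hO : ∑ o, P o * Q o * xo o - ∑ o, pis (oc o) * (Q o * xo o)
      = ∑ o, (P o - pis (oc o)) * Q o * xo o := by
    rw [← sum_sub_distrib]; exact sum_congr rfl fun _ _ => by ring
  have hCO : ∑ co, pis (dst co) * (eta co * Qco co * xc co) - ∑ co, pis (src co) * (Qco co * xc co)
        - ∑ co, Pco co * Qco co * xc co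
      = ∑ co, Qco co * convReducedProfit src dst eta Pco pis co * xc co := by
    rw [← sum_sub_distrib, ← sum_sub_distrib]
    exact sum_congr rfl fun _ _ => by rw [convReducedProfit]; ring
  rw [← hO, ← hCO]
  ring

theorem convLagrangian_update [DecidableEq CO] (oc : O → C) (P Q : O → ℝ) (src dst : CO → C)
    (Qco eta Pco : CO → ℝ) (pis : C → ℝ) (xo : O → ℝ) (xc : CO → ℝ) (co : CO) (t : ℝ) :
    convLagrangian oc P Q src dst Qco eta Pco pis xo (Function.update xc co t)
      = convLagrangian oc P Q src dst Qco eta Pco pis xo xc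
        + Qco co * convReducedProfit src dst eta Pco pis co * (t - xc co) := by
  rw [convLagrangian_eq_sum_reducedProfit, convLagrangian_eq_sum_reducedProfit,
    sum_mul_update, add_assoc]

theorem convLagrangian_eq_convWelfare {oc : O → C} {P Q : O → ℝ} {src dst : CO → C}
    {Qco eta Pco : CO → ℝ} {pis : C → ℝ} {xo : O → ℝ} {xc : CO → ℝ}
    (hbal : ∀ c, convBalance oc Q src dst Qco eta xo xc c = 0) :
    convLagrangian oc P Q src dst Qco eta Pco pis xo xc = convWelfare oc P Q Qco Pco xo xc := by
  simp [convLagrangian, hbal]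

theorem stmt_12_general
    (oc : O → C) (P Q : O → ℝ) (src dst : CO → C) (Qco eta Pco : CO → ℝ)
    (hQco : ∀ co, 0 < Qco co)
    (xo : O → ℝ) (xc : CO → ℝ) (pis : C → ℝ)
    -- primal feasibility
    (hxo : ∀ o, xo o ∈ Set.Icc (0:ℝ) 1) (hxc : ∀ co, xc co ∈ Set.Icc (0:ℝ) 1)
    (hbal : ∀ c1, convBalance oc Q src dst Qco eta xo xc c1 = 0)
    -- dual optimality of π*
    (hdual : ∀ (yo : O → ℝ) (yc : CO → ℝ),
      (∀ o, yo o ∈ Set.Icc (0:ℝ) 1) → (∀ co, yc co ∈ Set.Icc (0:ℝ) 1) →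
      convLagrangian oc P Q src dst Qco eta Pco pis yo yc
        ≤ convWelfare oc P Q Qco Pco xo xc)
    (c1 c2 : C)
    -- all conversion orders between c1 and c2 are lossless and costless
    (hall : ∀ co, src co = c1 → dst co = c2 → eta co = 1 ∧ Pco co = 0)
    -- some conversion order from c1 to c2 is strictly partially accepted
    (co : CO) (hsrc : src co = c1) (hdst : dst co = c2)
    (hfrac : 0 < xc co ∧ xc co < 1) :
    pis c2 = pis c1 := by
  classical
  have hstationary : ∀ t ∈ Set.Icc (0 : ℝ) 1,
      (t - xc co) * (Qco co * convReducedProfit src dst eta Pco pis co) ≤ 0 := by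
    intro t ht
    have hfeas : ∀ co', Function.update xc co t co' ∈ Set.Icc (0 : ℝ) 1 :=
      (Function.forall_update_iff xc fun _ y => y ∈ Set.Icc (0 : ℝ) 1).2
        ⟨ht, fun co' _ => hxc co'⟩
    have hle := hdual xo _ hxo hfeas
    rw [convLagrangian_update, convLagrangian_eq_convWelfare hbal] at hle
    linarith
  have hprofit : convReducedProfit src dst eta Pco pis co = 0 :=
    (mul_eq_zero.1 (eq_zero_of_forall_Icc_sub_mul_nonpos hfrac hstationary)).resolve_left
      (hQco co).ne'
  obtain ⟨heta, hPco⟩ := hall co hsrc hdst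
  rw [convReducedProfit, heta, hPco, hsrc, hdst] at hprofit
  linarith

/-- If all conversion orders between carriers `c1` and `c2`
have conversion efficiency `1` and zero conversion cost, and in the optimal
market outcome some conversion order from `c1` to `c2` is strictly partially
accepted (`0 < x*_co < 1`), then the optimal dual prices satisfy
`π*_{c2} = π*_{c1}` (full price convergence). -/
theorem stmt_12
    (oc : O → C) (P Q : O → ℝ) (src dst : CO → C) (Qco eta Pco : CO → ℝ)
    (hQco : ∀ co, 0 < Qco co)
    (xo : O → ℝ) (xc : CO → ℝ) (pis : C → ℝ)
    -- primal feasibility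
    (hxo : ∀ o, xo o ∈ Set.Icc (0:ℝ) 1) (hxc : ∀ co, xc co ∈ Set.Icc (0:ℝ) 1)
    (hbal : ∀ c1, convBalance oc Q src dst Qco eta xo xc c1 = 0)
    -- primal optimality
    (hopt : ∀ (yo : O → ℝ) (yc : CO → ℝ),
      (∀ o, yo o ∈ Set.Icc (0:ℝ) 1) → (∀ co, yc co ∈ Set.Icc (0:ℝ) 1) →
      (∀ c1, convBalance oc Q src dst Qco eta yo yc c1 = 0) →
      convWelfare oc P Q Qco Pco yo yc ≤ convWelfare oc P Q Qco Pco xo xc)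
    -- dual optimality of π*
    (hdual : ∀ (yo : O → ℝ) (yc : CO → ℝ),
      (∀ o, yo o ∈ Set.Icc (0:ℝ) 1) → (∀ co, yc co ∈ Set.Icc (0:ℝ) 1) →
      convLagrangian oc P Q src dst Qco eta Pco pis yo yc
        ≤ convWelfare oc P Q Qco Pco xo xc)
    (c1 c2 : C)
    -- all conversion orders between c1 and c2 are lossless and costless
    (hall : ∀ co, src co = c1 → dst co = c2 → eta co = 1 ∧ Pco co = 0)
    -- some conversion order from c1 to c2 is strictly partially accepted
    (co : CO) (hsrc : src co = c1) (hdst : dst co = c2)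
    (hfrac : 0 < xc co ∧ xc co < 1) :
    pis c2 = pis c1 :=
  stmt_12_general oc P Q src dst Qco eta Pco hQco xo xc pis hxo hxc hbal hdual c1 c2 hall co hsrc
    hdst hfrac

end PriceConvergence
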